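/- In the square-root estimator setting, with Q(A) = √((1/n)Σ(Y_i − ⟨X_i,A⟩)²), if Â_SQ minimizes Q(A) + λ‖A‖₁ over {‖A‖_∞ ≤ a}, ‖A₀‖_∞ ≤ a, Q(A₀) > 0, and λ > 3‖Σ‖/Q(A₀), then ‖P_{A₀}^⊥(Δ)‖₁ ≤ 2‖P_{A₀}(Δ)‖₁ where Δ = Â_SQ − A₀. -/

import Mathlib

open Matrix
noncomputable def nuclearNorm {m₁ m₂ : ℕ} (A : Matrix (Fin m₁) (Fin m₂) ℝ) : ℝ :=
  ∑ i, Real.sqrt ((show (Aᵀ * A).IsHermitian by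
    simpa [Matrix.conjTranspose_eq_transpose_of_trivial] using
      Matrix.isHermitian_conjTranspose_mul_self A).eigenvalues i)

noncomputable def opNorm {m₁ m₂ : ℕ} (A : Matrix (Fin m₁) (Fin m₂) ℝ) : ℝ :=
  ‖LinearMap.toContinuousLinearMap (Matrix.toEuclideanLin A)‖

noncomputable def frobNorm {m₁ m₂ : ℕ} (A : Matrix (Fin m₁) (Fin m₂) ℝ) : ℝ :=
  Real.sqrt (∑ j, ∑ k, (A j k) ^ 2)

noncomputable def mip {m₁ m₂ : ℕ} (A B : Matrix (Fin m₁) (Fin m₂) ℝ) : ℝ :=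
  (Aᵀ * B).trace

open Finset

/-!
Split `Δ = Â - A₀` as `B + C` with `B = P₁ Δ P₂`. The nuclear norm is dual to the operator norm:
`⟨W, M⟩ ≤ ‖W‖ ‖M‖₁`, with equality for the polar factor `W` of `M`. Since `A₀` and `B` have
orthogonal row spaces and orthogonal column spaces, the sum of their polar factors still has
operator norm at most one, so `‖A₀ + B‖₁ = ‖A₀‖₁ + ‖B‖₁` and hence
`‖Â‖₁ ≥ ‖A₀‖₁ + ‖B‖₁ - ‖C‖₁`. On the other side, Cauchy–Schwarz gives the subgradient inequality
`Q(A₀) (Q(A₀) - Q(Â)) ≤ ⟨Σ, Δ⟩ ≤ ‖Σ‖ (‖B‖₁ + ‖C‖₁)`. Comparing `Â` with `A₀` in the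
minimisation and using `λ Q(A₀) > 3 ‖Σ‖` leaves `3 (‖B‖₁ - ‖C‖₁) ≤ ‖B‖₁ + ‖C‖₁`.
-/

section

variable {m₁ m₂ : ℕ}

lemma mulVec_dotProduct_mulVec {R : Type*} [CommSemiring R] {l m n : Type*} [Fintype l]
    [Fintype m] [Fintype n] (A : Matrix l m R) (B : Matrix l n R) (x : m → R) (y : n → R) :
    (A *ᵥ x) ⬝ᵥ (B *ᵥ y) = x ⬝ᵥ ((Aᵀ * B) *ᵥ y) := by
  rw [← mulVec_mulVec, dotProduct_mulVec x, vecMul_transpose]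

lemma transpose_mul_self_apply_self {R : Type*} [CommSemiring R] {m n : Type*} [Fintype m]
    [Fintype n] [DecidableEq n] (A : Matrix m n R) (k : n) :
    (Aᵀ * A) k k = (A *ᵥ Pi.single k 1) ⬝ᵥ (A *ᵥ Pi.single k 1) := by
  rw [mulVec_dotProduct_mulVec, mulVec_single_one, single_one_dotProduct]
  rfl

lemma mip_add_left (A B C : Matrix (Fin m₁) (Fin m₂) ℝ) :
    mip (A + B) C = mip A C + mip B C := by
  simp [mip, Matrix.add_mul]

lemma mip_add_right (A B C : Matrix (Fin m₁) (Fin m₂) ℝ) :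
    mip A (B + C) = mip A B + mip A C := by
  simp [mip, Matrix.mul_add]

lemma mip_sub_right (A B C : Matrix (Fin m₁) (Fin m₂) ℝ) :
    mip A (B - C) = mip A B - mip A C := by
  simp [mip, Matrix.mul_sub]

lemma mip_smul_left (c : ℝ) (A B : Matrix (Fin m₁) (Fin m₂) ℝ) :
    mip (c • A) B = c * mip A B := by
  simp [mip]

lemma mip_sum_left {ι : Type*} (s : Finset ι) (A : ι → Matrix (Fin m₁) (Fin m₂) ℝ)
    (B : Matrix (Fin m₁) (Fin m₂) ℝ) : mip (∑ i ∈ s, A i) B = ∑ i ∈ s, mip (A i) B := by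
  simp [mip, Matrix.transpose_sum, Matrix.sum_mul, Matrix.trace_sum]

lemma mip_mul_mul_of_mul_transpose_eq_one {V : Matrix (Fin m₂) (Fin m₂) ℝ} (hV : V * Vᵀ = 1)
    (A B : Matrix (Fin m₁) (Fin m₂) ℝ) : mip (A * V) (B * V) = mip A B := by
  rw [mip, mip, transpose_mul, Matrix.mul_assoc, trace_mul_comm, Matrix.mul_assoc,
    Matrix.mul_assoc, hV, Matrix.mul_one]

lemma mip_le_sum_sqrt_mul_sqrt (A B : Matrix (Fin m₁) (Fin m₂) ℝ) :
    mip A B ≤ ∑ k, √((Aᵀ * A) k k) * √((Bᵀ * B) k k) := by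
  simp only [mip, trace, diag_apply, mul_apply, transpose_apply, ← sq]
  exact sum_le_sum fun k _ => Real.sum_mul_le_sqrt_mul_sqrt _ _ _

lemma EuclideanSpace.real_norm_sq_eq_dotProduct {ι : Type*} [Fintype ι]
    (x : EuclideanSpace ℝ ι) :
    ‖x‖ ^ 2 = x.ofLp ⬝ᵥ x.ofLp := by
  rw [EuclideanSpace.real_norm_sq_eq]
  simp only [dotProduct, sq]

lemma opNorm_nonneg (W : Matrix (Fin m₁) (Fin m₂) ℝ) : 0 ≤ opNorm W := norm_nonneg _

lemma mulVec_dotProduct_self_le_opNorm_sq (W : Matrix (Fin m₁) (Fin m₂) ℝ)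
    (x : Fin m₂ → ℝ) :
    (W *ᵥ x) ⬝ᵥ (W *ᵥ x) ≤ opNorm W ^ 2 * (x ⬝ᵥ x) := by
  have h := (LinearMap.toContinuousLinearMap (toEuclideanLin W)).le_opNorm (WithLp.toLp 2 x)
  rw [LinearMap.coe_toContinuousLinearMap', toLpLin_apply] at h
  have h2 := pow_le_pow_left₀ (norm_nonneg _) h 2
  rwa [mul_pow, EuclideanSpace.real_norm_sq_eq_dotProduct,
    EuclideanSpace.real_norm_sq_eq_dotProduct] at h2

lemma opNorm_le_one_iff {W : Matrix (Fin m₁) (Fin m₂) ℝ} :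
    opNorm W ≤ 1 ↔ ∀ x, (W *ᵥ x) ⬝ᵥ (W *ᵥ x) ≤ x ⬝ᵥ x := by
  refine ⟨fun hW x => ?_, fun h => ?_⟩
  · refine (mulVec_dotProduct_self_le_opNorm_sq W x).trans (mul_le_of_le_one_left ?_ ?_)
    · simpa using dotProduct_star_self_nonneg x
    · exact pow_le_one₀ (opNorm_nonneg W) hW
  · refine ContinuousLinearMap.opNorm_le_bound _ zero_le_one fun x => ?_
    rw [one_mul, LinearMap.coe_toContinuousLinearMap', toLpLin_apply,
      ← sq_le_sq₀ (norm_nonneg _) (norm_nonneg _), EuclideanSpace.real_norm_sq_eq_dotProduct,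
      EuclideanSpace.real_norm_sq_eq_dotProduct]
    exact h _

lemma opNorm_le_one_of_transpose_mul_self_eq {W : Matrix (Fin m₁) (Fin m₂) ℝ}
    {V : Matrix (Fin m₂) (Fin m₂) ℝ} {ε : Fin m₂ → ℝ} (hV : V * Vᵀ = 1) (hε : ∀ i, ε i ≤ 1)
    (hW : Wᵀ * W = V * diagonal ε * Vᵀ) : opNorm W ≤ 1 := by
  refine opNorm_le_one_iff.mpr fun x => ?_
  calc (W *ᵥ x) ⬝ᵥ (W *ᵥ x) = (Vᵀ *ᵥ x) ⬝ᵥ (diagonal ε *ᵥ (Vᵀ *ᵥ x)) := by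
        rw [mulVec_dotProduct_mulVec, mulVec_mulVec, mulVec_dotProduct_mulVec, hW,
          transpose_transpose, Matrix.mul_assoc]
    _ ≤ (Vᵀ *ᵥ x) ⬝ᵥ (Vᵀ *ᵥ x) := by
        simp only [mulVec_diagonal, dotProduct]
        exact sum_le_sum fun i _ => by nlinarith [hε i, mul_self_nonneg ((Vᵀ *ᵥ x) i)]
    _ = x ⬝ᵥ x := by rw [mulVec_dotProduct_mulVec, transpose_transpose, hV, one_mulVec]

section SingularValues

variable (M : Matrix (Fin m₁) (Fin m₂) ℝ)

lemma isHermitian_transpose_mul_self : (Mᵀ * M).IsHermitian := by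
  simpa [conjTranspose_eq_transpose_of_trivial] using isHermitian_conjTranspose_mul_self M

noncomputable def rightSingularVectors : Matrix (Fin m₂) (Fin m₂) ℝ :=
  (isHermitian_transpose_mul_self M).eigenvectorUnitary

noncomputable def sqSingularValues : Fin m₂ → ℝ :=
  (isHermitian_transpose_mul_self M).eigenvalues

lemma nuclearNorm_eq_sum_sqrt : nuclearNorm M = ∑ i, √(sqSingularValues M i) := rfl

lemma nuclearNorm_nonneg : 0 ≤ nuclearNorm M :=
  sum_nonneg fun _ _ => Real.sqrt_nonneg _

lemma nuclearNorm_neg : nuclearNorm (-M) = nuclearNorm M := by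
  have key : ∀ {S T : Matrix (Fin m₂) (Fin m₂) ℝ} (hS : S.IsHermitian) (hT : T.IsHermitian),
      S = T → hS.eigenvalues = hT.eigenvalues := by
    rintro _ _ _ _ rfl
    rfl
  rw [nuclearNorm_eq_sum_sqrt, nuclearNorm_eq_sum_sqrt, sqSingularValues, sqSingularValues,
    key _ (isHermitian_transpose_mul_self M)
      (by rw [transpose_neg, Matrix.neg_mul, Matrix.mul_neg, neg_neg])]

lemma rightSingularVectors_mul_transpose :
    rightSingularVectors M * (rightSingularVectors M)ᵀ = 1 := by
  have h := mem_unitaryGroup_iff.mp (isHermitian_transpose_mul_self M).eigenvectorUnitary.2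
  rwa [star_eq_conjTranspose, conjTranspose_eq_transpose_of_trivial] at h

lemma transpose_mul_rightSingularVectors :
    (rightSingularVectors M)ᵀ * rightSingularVectors M = 1 := by
  have h := mem_unitaryGroup_iff'.mp (isHermitian_transpose_mul_self M).eigenvectorUnitary.2
  rwa [star_eq_conjTranspose, conjTranspose_eq_transpose_of_trivial] at h

lemma transpose_mul_self_eq :
    Mᵀ * M = rightSingularVectors M * diagonal (sqSingularValues M) *
      (rightSingularVectors M)ᵀ := by
  conv_lhs => rw [(isHermitian_transpose_mul_self M).spectral_theorem]
  simp [rightSingularVectors, sqSingularValues, star_eq_conjTranspose,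
    conjTranspose_eq_transpose_of_trivial]

lemma gram_mul_rightSingularVectors :
    (M * rightSingularVectors M)ᵀ * (M * rightSingularVectors M) =
      diagonal (sqSingularValues M) := by
  rw [transpose_mul, Matrix.mul_assoc, ← Matrix.mul_assoc Mᵀ, transpose_mul_self_eq]
  simp only [Matrix.mul_assoc, transpose_mul_rightSingularVectors, Matrix.mul_one]
  rw [← Matrix.mul_assoc, transpose_mul_rightSingularVectors, Matrix.one_mul]

end SingularValues

lemma mip_le_opNorm_mul_nuclearNorm (W M : Matrix (Fin m₁) (Fin m₂) ℝ) :
    mip W M ≤ opNorm W * nuclearNorm M := by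
  set V := rightSingularVectors M
  have hcol : ∀ k, ((W * V)ᵀ * (W * V)) k k ≤ opNorm W ^ 2 := fun k => by
    have h := mulVec_dotProduct_self_le_opNorm_sq W (V *ᵥ Pi.single k 1)
    rwa [← transpose_mul_self_apply_self, transpose_mul_rightSingularVectors, one_apply_eq,
      mul_one, mulVec_mulVec, ← transpose_mul_self_apply_self] at h
  calc mip W M = mip (W * V) (M * V) :=
        (mip_mul_mul_of_mul_transpose_eq_one (rightSingularVectors_mul_transpose M) W M).symm
    _ ≤ ∑ k, √(((W * V)ᵀ * (W * V)) k k) * √(((M * V)ᵀ * (M * V)) k k) :=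
        mip_le_sum_sqrt_mul_sqrt _ _
    _ ≤ ∑ k, opNorm W * √(sqSingularValues M k) := by
        refine sum_le_sum fun k _ => ?_
        rw [gram_mul_rightSingularVectors, diagonal_apply_eq]
        gcongr
        exact (Real.sqrt_le_left (opNorm_nonneg W)).mpr (hcol k)
    _ = opNorm W * nuclearNorm M := by rw [← mul_sum, nuclearNorm_eq_sum_sqrt]

/-- Since `(√0)⁻¹ = 0`, this is the partial isometry `U` of the polar decomposition
`M = U (Mᵀ M)^(1/2)`. -/
noncomputable def polarFactor (M : Matrix (Fin m₁) (Fin m₂) ℝ) : Matrix (Fin m₁) (Fin m₂) ℝ :=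
  M * rightSingularVectors M * diagonal (fun i => (√(sqSingularValues M i))⁻¹) *
    (rightSingularVectors M)ᵀ

lemma exists_polarFactor_eq (M : Matrix (Fin m₁) (Fin m₂) ℝ) :
    ∃ G : Matrix (Fin m₂) (Fin m₂) ℝ, polarFactor M = M * G * (Mᵀ * M) := by
  have hMM := transpose_mul_self_eq M
  have hVV := transpose_mul_rightSingularVectors M
  rw [polarFactor]
  set V := rightSingularVectors M
  set e := sqSingularValues M
  refine ⟨V * diagonal (fun i => (e i)⁻¹ * (√(e i))⁻¹) * Vᵀ, ?_⟩
  have he : ∀ i, (e i)⁻¹ * (√(e i))⁻¹ * e i = (√(e i))⁻¹ := fun i => by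
    rcases eq_or_ne (e i) 0 with h | h
    · simp [h]
    · field_simp
  rw [hMM]
  simp only [Matrix.mul_assoc]
  rw [← Matrix.mul_assoc Vᵀ V, hVV, Matrix.one_mul, ← Matrix.mul_assoc (diagonal _),
    diagonal_mul_diagonal]
  simp only [he]

lemma opNorm_polarFactor_le_one (M : Matrix (Fin m₁) (Fin m₂) ℝ) :
    opNorm (polarFactor M) ≤ 1 := by
  have hN := gram_mul_rightSingularVectors M
  have hVV' := rightSingularVectors_mul_transpose M
  rw [polarFactor]
  set V := rightSingularVectors M
  set e := sqSingularValues M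
  set N := M * V
  refine opNorm_le_one_of_transpose_mul_self_eq hVV'
    (ε := fun i => (√(e i))⁻¹ * e i * (√(e i))⁻¹) (fun i => ?_) ?_
  · rw [mul_comm (√(e i))⁻¹ (e i), ← div_eq_mul_inv (e i), Real.div_sqrt]
    exact mul_inv_le_one
  · rw [transpose_mul, transpose_mul, transpose_transpose, diagonal_transpose]
    simp only [Matrix.mul_assoc]
    rw [← Matrix.mul_assoc Nᵀ N, hN, ← Matrix.mul_assoc (diagonal _) (diagonal _),
      diagonal_mul_diagonal, ← Matrix.mul_assoc (diagonal _) (diagonal _),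
      diagonal_mul_diagonal]

lemma mip_polarFactor_self (M : Matrix (Fin m₁) (Fin m₂) ℝ) :
    mip (polarFactor M) M = nuclearNorm M := by
  have hN := gram_mul_rightSingularVectors M
  rw [← mip_mul_mul_of_mul_transpose_eq_one (rightSingularVectors_mul_transpose M),
    polarFactor,
    Matrix.mul_assoc _ (rightSingularVectors M)ᵀ, transpose_mul_rightSingularVectors,
    Matrix.mul_one, mip, transpose_mul, diagonal_transpose, Matrix.mul_assoc, hN,
    diagonal_mul_diagonal, trace_diagonal, nuclearNorm_eq_sum_sqrt]
  simp only [inv_mul_eq_div, Real.div_sqrt]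

lemma transpose_polarFactor_mul_eq_zero {m : ℕ} {A : Matrix (Fin m₁) (Fin m₂) ℝ}
    {C : Matrix (Fin m₁) (Fin m) ℝ} (h : Aᵀ * C = 0) : (polarFactor A)ᵀ * C = 0 := by
  obtain ⟨G, hG⟩ := exists_polarFactor_eq A
  simp only [hG, transpose_mul, transpose_transpose, Matrix.mul_assoc, h, Matrix.mul_zero]

lemma mip_polarFactor_eq_zero {A C : Matrix (Fin m₁) (Fin m₂) ℝ} (h : Aᵀ * C = 0) :
    mip (polarFactor A) C = 0 := by
  rw [mip, transpose_polarFactor_mul_eq_zero h, trace_zero]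

lemma polarFactor_mul_eq_zero {A : Matrix (Fin m₁) (Fin m₂) ℝ}
    {P : Matrix (Fin m₂) (Fin m₂) ℝ} (h : A * P = 0) : polarFactor A * P = 0 := by
  obtain ⟨G, hG⟩ := exists_polarFactor_eq A
  rw [hG, Matrix.mul_assoc, Matrix.mul_assoc Aᵀ, h, Matrix.mul_zero, Matrix.mul_zero]

lemma polarFactor_mul_eq_self {B : Matrix (Fin m₁) (Fin m₂) ℝ}
    {P : Matrix (Fin m₂) (Fin m₂) ℝ} (h : B * P = B) : polarFactor B * P = polarFactor B := by
  obtain ⟨G, hG⟩ := exists_polarFactor_eq B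
  rw [hG, Matrix.mul_assoc, Matrix.mul_assoc Bᵀ, h]

lemma nuclearNorm_add_le (A B : Matrix (Fin m₁) (Fin m₂) ℝ) :
    nuclearNorm (A + B) ≤ nuclearNorm A + nuclearNorm B := by
  have hW := opNorm_polarFactor_le_one (A + B)
  calc nuclearNorm (A + B) = mip (polarFactor (A + B)) A + mip (polarFactor (A + B)) B := by
        rw [← mip_add_right, mip_polarFactor_self]
    _ ≤ nuclearNorm A + nuclearNorm B := add_le_add
        ((mip_le_opNorm_mul_nuclearNorm _ _).trans
          (mul_le_of_le_one_left (nuclearNorm_nonneg A) hW))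
        ((mip_le_opNorm_mul_nuclearNorm _ _).trans
          (mul_le_of_le_one_left (nuclearNorm_nonneg B) hW))

lemma opNorm_add_le_one_of_orthogonal {W₁ W₂ : Matrix (Fin m₁) (Fin m₂) ℝ}
    {P : Matrix (Fin m₂) (Fin m₂) ℝ} (hPs : Pᵀ = P) (hPi : P * P = P) (h₁ : W₁ * P = 0)
    (h₂ : W₂ * P = W₂) (h₁₂ : W₁ᵀ * W₂ = 0) (hW₁ : opNorm W₁ ≤ 1) (hW₂ : opNorm W₂ ≤ 1) :
    opNorm (W₁ + W₂) ≤ 1 := by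
  have pythagoras : ∀ {m : ℕ} (u v : Fin m → ℝ), u ⬝ᵥ v = 0 →
      (u + v) ⬝ᵥ (u + v) = u ⬝ᵥ u + v ⬝ᵥ v := fun u v h => by
    rw [add_dotProduct, dotProduct_add, dotProduct_add, h, dotProduct_comm v u, h]
    ring
  refine opNorm_le_one_iff.mpr fun x => ?_
  set y := x - P *ᵥ x
  set z := P *ᵥ x
  have hx : (W₁ + W₂) *ᵥ x = W₁ *ᵥ y + W₂ *ᵥ z := by
    rw [mulVec_sub, mulVec_mulVec, h₁, zero_mulVec, sub_zero, mulVec_mulVec, h₂, add_mulVec]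
  have hWyz : (W₁ *ᵥ y) ⬝ᵥ (W₂ *ᵥ z) = 0 := by
    rw [mulVec_dotProduct_mulVec, h₁₂, zero_mulVec, dotProduct_zero]
  have hyz : y ⬝ᵥ z = 0 := by
    have hPP : (P *ᵥ x) ⬝ᵥ (P *ᵥ x) = x ⬝ᵥ (P *ᵥ x) := by
      rw [mulVec_dotProduct_mulVec, hPs, hPi]
    rw [sub_dotProduct, hPP, sub_self]
  calc ((W₁ + W₂) *ᵥ x) ⬝ᵥ ((W₁ + W₂) *ᵥ x) =
        (W₁ *ᵥ y) ⬝ᵥ (W₁ *ᵥ y) + (W₂ *ᵥ z) ⬝ᵥ (W₂ *ᵥ z) := by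
        rw [hx, pythagoras _ _ hWyz]
    _ ≤ y ⬝ᵥ y + z ⬝ᵥ z :=
        add_le_add (opNorm_le_one_iff.mp hW₁ y) (opNorm_le_one_iff.mp hW₂ z)
    _ = x ⬝ᵥ x := by rw [← pythagoras _ _ hyz, sub_add_cancel]

lemma nuclearNorm_add_of_orthogonal {A B : Matrix (Fin m₁) (Fin m₂) ℝ}
    {P : Matrix (Fin m₂) (Fin m₂) ℝ} (hPs : Pᵀ = P) (hPi : P * P = P) (hA : A * P = 0)
    (hB : B * P = B) (hAB : Aᵀ * B = 0) :
    nuclearNorm (A + B) = nuclearNorm A + nuclearNorm B := by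
  refine le_antisymm (nuclearNorm_add_le A B) ?_
  have hBA : Bᵀ * A = 0 := by rw [← transpose_transpose A, ← transpose_mul, hAB, transpose_zero]
  have hAW : Aᵀ * polarFactor B = 0 := by
    rw [← transpose_transpose (polarFactor B), ← transpose_mul,
      transpose_polarFactor_mul_eq_zero hBA, transpose_zero]
  have hW := opNorm_add_le_one_of_orthogonal hPs hPi (polarFactor_mul_eq_zero hA)
    (polarFactor_mul_eq_self hB) (transpose_polarFactor_mul_eq_zero hAW)
    (opNorm_polarFactor_le_one A) (opNorm_polarFactor_le_one B)
  calc nuclearNorm A + nuclearNorm B = mip (polarFactor A + polarFactor B) (A + B) := by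
        rw [mip_add_left, mip_add_right, mip_add_right, mip_polarFactor_eq_zero hAB,
          mip_polarFactor_eq_zero hBA, mip_polarFactor_self, mip_polarFactor_self, add_zero,
          zero_add]
    _ ≤ nuclearNorm (A + B) :=
        (mip_le_opNorm_mul_nuclearNorm _ _).trans
          (mul_le_of_le_one_left (nuclearNorm_nonneg _) hW)

lemma mul_eq_zero_of_range_le {R : Type*} [CommRing R] {m k : Type*} [Fintype m] [DecidableEq m]
    [Fintype k] [DecidableEq k] {P : Matrix m m R} (hP : P * P = P) {A : Matrix m k R}
    (h : LinearMap.range (mulVecLin A) ≤ LinearMap.range (mulVecLin (1 - P))) : P * A = 0 := by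
  have hker : LinearMap.range (mulVecLin (1 - P)) ≤ LinearMap.ker (mulVecLin P) := by
    rw [LinearMap.range_le_ker_iff, ← mulVecLin_mul, Matrix.mul_sub, Matrix.mul_one, hP, sub_self,
      mulVecLin_zero]
  ext i j
  have hcol := h.trans hker ⟨Pi.single j 1, rfl⟩
  rw [LinearMap.mem_ker, mulVecLin_apply, mulVecLin_apply, mulVec_mulVec,
    mulVec_single_one] at hcol
  exact congrFun hcol i

lemma add_nuclearNorm_le_of_projections {A₀ : Matrix (Fin m₁) (Fin m₂) ℝ}
    {P₁ : Matrix (Fin m₁) (Fin m₁) ℝ} {P₂ : Matrix (Fin m₂) (Fin m₂) ℝ}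
    (hP₁s : P₁ᵀ = P₁) (hP₁i : P₁ * P₁ = P₁)
    (hP₁r : LinearMap.range (mulVecLin A₀) ≤ LinearMap.range (mulVecLin (1 - P₁)))
    (hP₂s : P₂ᵀ = P₂) (hP₂i : P₂ * P₂ = P₂)
    (hP₂r : LinearMap.range (mulVecLin A₀ᵀ) ≤ LinearMap.range (mulVecLin (1 - P₂)))
    (Δ : Matrix (Fin m₁) (Fin m₂) ℝ) :
    nuclearNorm A₀ + nuclearNorm (P₁ * Δ * P₂) ≤
      nuclearNorm (A₀ + Δ) + nuclearNorm (Δ - P₁ * Δ * P₂) := by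
  have hA₀P₂ : A₀ * P₂ = 0 := by
    simpa [hP₂s] using congrArg transpose (mul_eq_zero_of_range_le hP₂i hP₂r)
  have hA₀B : A₀ᵀ * (P₁ * Δ * P₂) = 0 := by
    rw [← hP₁s, ← Matrix.mul_assoc, ← Matrix.mul_assoc, ← transpose_mul,
      mul_eq_zero_of_range_le hP₁i hP₁r, transpose_zero, Matrix.zero_mul, Matrix.zero_mul]
  rw [← nuclearNorm_add_of_orthogonal hP₂s hP₂i hA₀P₂ (by rw [Matrix.mul_assoc, hP₂i]) hA₀B,
    ← nuclearNorm_neg (Δ - _)]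
  convert nuclearNorm_add_le (A₀ + Δ) (-(Δ - P₁ * Δ * P₂)) using 2
  abel

lemma sqrt_mul_sum_sq_mul_sub_le {ι : Type*} (s : Finset ι) {c : ℝ} (hc : 0 ≤ c) (u r : ι → ℝ) :
    √(c * ∑ i ∈ s, u i ^ 2) * (√(c * ∑ i ∈ s, u i ^ 2) - √(c * ∑ i ∈ s, r i ^ 2)) ≤
      c * ∑ i ∈ s, u i * (u i - r i) := by
  have hcs : c * ∑ i ∈ s, u i * r i ≤ √(c * ∑ i ∈ s, u i ^ 2) * √(c * ∑ i ∈ s, r i ^ 2) := by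
    rw [Real.sqrt_mul hc, Real.sqrt_mul hc, mul_mul_mul_comm, Real.mul_self_sqrt hc]
    exact mul_le_mul_of_nonneg_left (Real.sum_mul_le_sqrt_mul_sqrt s u r) hc
  have hsq : √(c * ∑ i ∈ s, u i ^ 2) ^ 2 = c * ∑ i ∈ s, u i ^ 2 :=
    Real.sq_sqrt (by positivity)
  simp only [mul_sub, sum_sub_distrib, ← sq] at hsq ⊢
  linarith

lemma sqrtLoss_mul_sub_le {n : ℕ} (X : Fin n → Matrix (Fin m₁) (Fin m₂) ℝ) (ξ : Fin n → ℝ)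
    (σ : ℝ) (A₀ A : Matrix (Fin m₁) (Fin m₂) ℝ) (Y : Fin n → ℝ)
    (hY : ∀ i, Y i = mip (X i) A₀ + σ * ξ i) (Q : Matrix (Fin m₁) (Fin m₂) ℝ → ℝ)
    (hQ : ∀ A, Q A = √((1 / n : ℝ) * ∑ i, (Y i - mip (X i) A) ^ 2)) :
    Q A₀ * (Q A₀ - Q A) ≤ mip ((σ / n) • ∑ i, ξ i • X i) (A - A₀) := by
  rw [hQ, hQ]
  refine (sqrt_mul_sum_sq_mul_sub_le _ (by positivity) _ _).trans_eq ?_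
  rw [mip_smul_left, mip_sum_left, mul_sum, mul_sum]
  refine sum_congr rfl fun i _ => ?_
  rw [hY, mip_smul_left, mip_sub_right]
  ring

end

theorem cone_condition_sqrt_general {m₁ m₂ n : ℕ}
    (X : Fin n → Matrix (Fin m₁) (Fin m₂) ℝ) (ξ : Fin n → ℝ) (σ lam a : ℝ)
    (A₀ Asq : Matrix (Fin m₁) (Fin m₂) ℝ)
    (hA₀ : ∀ j k, |A₀ j k| ≤ a)
    (Y : Fin n → ℝ) (hY : ∀ i, Y i = mip (X i) A₀ + σ * ξ i)
    (Q : Matrix (Fin m₁) (Fin m₂) ℝ → ℝ)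
    (hQ : ∀ A, Q A = Real.sqrt ((1 / n : ℝ) * ∑ i, (Y i - mip (X i) A) ^ 2))
    (hQ₀ : 0 < Q A₀)
    (hmin : ∀ A : Matrix (Fin m₁) (Fin m₂) ℝ, (∀ j k, |A j k| ≤ a) →
      Q Asq + lam * nuclearNorm Asq ≤ Q A + lam * nuclearNorm A)
    (hlam : lam > 3 * opNorm ((σ / n) • ∑ i, ξ i • X i) / Q A₀)
    (P₁ : Matrix (Fin m₁) (Fin m₁) ℝ) (P₂ : Matrix (Fin m₂) (Fin m₂) ℝ)
    (hP₁s : P₁ᵀ = P₁) (hP₁i : P₁ * P₁ = P₁)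
    (hP₁r : LinearMap.range (Matrix.mulVecLin (1 - P₁)) =
      LinearMap.range (Matrix.mulVecLin A₀))
    (hP₂s : P₂ᵀ = P₂) (hP₂i : P₂ * P₂ = P₂)
    (hP₂r : LinearMap.range (Matrix.mulVecLin (1 - P₂)) =
      LinearMap.range (Matrix.mulVecLin A₀ᵀ)) :
    nuclearNorm (P₁ * (Asq - A₀) * P₂) ≤
      2 * nuclearNorm ((Asq - A₀) - P₁ * (Asq - A₀) * P₂) := by
  set Δ := Asq - A₀
  set B := P₁ * Δ * P₂
  set Sn := (σ / n) • ∑ i, ξ i • X i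
  have hdecomp := add_nuclearNorm_le_of_projections hP₁s hP₁i hP₁r.ge hP₂s hP₂i hP₂r.ge Δ
  rw [add_sub_cancel] at hdecomp
  set C := Δ - B
  have hΔ : nuclearNorm Δ ≤ nuclearNorm B + nuclearNorm C := by
    simpa [C] using nuclearNorm_add_le B C
  have hgrad := (sqrtLoss_mul_sub_le X ξ σ A₀ Asq Y hY Q hQ).trans
    ((mip_le_opNorm_mul_nuclearNorm Sn Δ).trans (mul_le_mul_of_nonneg_left hΔ (opNorm_nonneg Sn)))
  have hopt := hmin A₀ hA₀
  rw [gt_iff_lt, div_lt_iff₀ hQ₀] at hlam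
  have hlam₀ : 0 < lam := by nlinarith [opNorm_nonneg Sn]
  have hBC := add_nonneg (nuclearNorm_nonneg B) (nuclearNorm_nonneg C)
  have key : lam * Q A₀ * (3 * (nuclearNorm B - nuclearNorm C)) ≤
      lam * Q A₀ * (nuclearNorm B + nuclearNorm C) :=
    calc lam * Q A₀ * (3 * (nuclearNorm B - nuclearNorm C))
        = 3 * Q A₀ * (lam * (nuclearNorm B - nuclearNorm C)) := by ring
      _ ≤ 3 * Q A₀ * (Q A₀ - Q Asq) := by
        gcongr
        nlinarith [mul_le_mul_of_nonneg_left hdecomp hlam₀.le]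
      _ ≤ 3 * opNorm Sn * (nuclearNorm B + nuclearNorm C) := by linarith
      _ ≤ lam * Q A₀ * (nuclearNorm B + nuclearNorm C) := by gcongr
  linarith [le_of_mul_le_mul_left key (mul_pos hlam₀ hQ₀)]

/-- Cone condition for the square-root estimator: if Q(A₀) > 0 and
λ > 3‖Σ‖/Q(A₀), then ‖P_{A₀}^⊥(Δ)‖₁ ≤ 2‖P_{A₀}(Δ)‖₁ where Δ = Â_SQ − A₀. -/
theorem cone_condition_sqrt {m₁ m₂ n : ℕ} (hn : 0 < n)
    (X : Fin n → Matrix (Fin m₁) (Fin m₂) ℝ) (ξ : Fin n → ℝ) (σ lam a : ℝ)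
    (hσ : 0 < σ)
    (A₀ Asq : Matrix (Fin m₁) (Fin m₂) ℝ)
    (hA₀ : ∀ j k, |A₀ j k| ≤ a) (hAsq : ∀ j k, |Asq j k| ≤ a)
    (Y : Fin n → ℝ) (hY : ∀ i, Y i = mip (X i) A₀ + σ * ξ i)
    (Q : Matrix (Fin m₁) (Fin m₂) ℝ → ℝ)
    (hQ : ∀ A, Q A = Real.sqrt ((1 / n : ℝ) * ∑ i, (Y i - mip (X i) A) ^ 2))
    (hQ₀ : 0 < Q A₀)
    (hmin : ∀ A : Matrix (Fin m₁) (Fin m₂) ℝ, (∀ j k, |A j k| ≤ a) →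
      Q Asq + lam * nuclearNorm Asq ≤ Q A + lam * nuclearNorm A)
    (hlam : lam > 3 * opNorm ((σ / n) • ∑ i, ξ i • X i) / Q A₀)
    (P₁ : Matrix (Fin m₁) (Fin m₁) ℝ) (P₂ : Matrix (Fin m₂) (Fin m₂) ℝ)
    (hP₁s : P₁ᵀ = P₁) (hP₁i : P₁ * P₁ = P₁)
    (hP₁r : LinearMap.range (Matrix.mulVecLin (1 - P₁)) =
      LinearMap.range (Matrix.mulVecLin A₀))
    (hP₂s : P₂ᵀ = P₂) (hP₂i : P₂ * P₂ = P₂)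
    (hP₂r : LinearMap.range (Matrix.mulVecLin (1 - P₂)) =
      LinearMap.range (Matrix.mulVecLin A₀ᵀ)) :
    nuclearNorm (P₁ * (Asq - A₀) * P₂) ≤
      2 * nuclearNorm ((Asq - A₀) - P₁ * (Asq - A₀) * P₂) :=
  cone_condition_sqrt_general X ξ σ lam a A₀ Asq hA₀ Y hY Q hQ hQ₀ hmin hlam P₁ P₂ hP₁s hP₁i hP₁r
    hP₂s hP₂i hP₂r
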